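/- For a vector z in R^d with ||z||_2 ≤ B, let z+ = max(z,0) and z- = max(-z,0) componentwise, and define integer vectors a, b ∈ N^d by a_j = ⌊(m-1)·z+_j / B⌋ and b_j = ⌊(m-1)·z-_j / B⌋ for an integer m ≥ 2. Then ||a||_1 + ||b||_1 ≤ (m-1)^2. -/
import Mathlib


/-- DataQ: the integer level-index vectors `a`, `b` satisfy `‖a‖₁ + ‖b‖₁ ≤ (m-1)²`. -/
theorem stmt_0 (d m : ℕ) (hm : 2 ≤ m) (B : ℝ) (hB : 0 < B)
    (z : EuclideanSpace ℝ (Fin d)) (hz : ‖z‖ ≤ B)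
    (a b : Fin d → ℕ)
    (ha : ∀ j, a j = ⌊((m : ℝ) - 1) * max (z j) 0 / B⌋₊)
    (hb : ∀ j, b j = ⌊((m : ℝ) - 1) * max (-(z j)) 0 / B⌋₊) :
    (∑ j, a j) + (∑ j, b j) ≤ (m - 1) ^ 2 := by
  have hm1 : (1:ℝ) ≤ (m:ℝ) := by exact_mod_cast Nat.one_le_of_lt hm
  have hm0 : (0:ℝ) ≤ (m:ℝ) - 1 := by linarith
  -- key per-coordinate bound
  have hkey : ∀ j, ((a j + b j : ℕ) : ℝ) ≤ (((m:ℝ)-1)/B)^2 * (z j)^2 := by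
    intro j
    have hbound : ((a j + b j : ℕ) : ℝ) ≤ ((m:ℝ)-1) * |z j| / B := by
      rcases le_or_gt 0 (z j) with h | h
      · have hb0 : b j = 0 := by
          rw [hb j, max_eq_right (by linarith : -(z j) ≤ 0)]
          simp
        rw [hb0]
        rw [ha j, max_eq_left h]
        push_cast
        rw [add_zero, abs_of_nonneg h]
        exact Nat.floor_le (div_nonneg (mul_nonneg hm0 h) hB.le)
      · have ha0 : a j = 0 := by
          rw [ha j, max_eq_right h.le]
          simp
        rw [ha0]
        rw [hb j, max_eq_left (by linarith : (0:ℝ) ≤ -(z j))]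
        push_cast
        rw [zero_add, abs_of_neg h]
        exact Nat.floor_le (div_nonneg (mul_nonneg hm0 (by linarith)) hB.le)
    have hsq : ((a j + b j : ℕ) : ℝ) ≤ (((a j + b j : ℕ) : ℝ))^2 := by
      have : (a j + b j) ≤ (a j + b j)^2 := Nat.le_self_pow (by norm_num) _
      exact_mod_cast this
    have h2 : (((a j + b j : ℕ) : ℝ))^2 ≤ (((m:ℝ)-1) * |z j| / B)^2 := by
      apply pow_le_pow_left₀ (by positivity) hbound
    calc ((a j + b j : ℕ) : ℝ) ≤ (((m:ℝ)-1) * |z j| / B)^2 := hsq.trans h2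
      _ = (((m:ℝ)-1)/B)^2 * (z j)^2 := by rw [← sq_abs (z j)]; ring
  have hnorm : ∑ j, (z j)^2 ≤ B^2 := by
    have := EuclideanSpace.norm_eq z
    have h1 : ‖z‖^2 = ∑ j, (z j)^2 := by
      rw [this, Real.sq_sqrt (by positivity)]
      simp [Real.norm_eq_abs, sq_abs]
    rw [← h1]
    have : 0 ≤ ‖z‖ := norm_nonneg z
    nlinarith
  have hsum : ((∑ j, a j) + (∑ j, b j) : ℕ) ≤ ((m:ℝ)-1)^2 := by
    push_cast
    have : ∑ j, ((a j : ℝ) + (b j : ℝ)) ≤ (((m:ℝ)-1)/B)^2 * ∑ j, (z j)^2 := by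
      rw [Finset.mul_sum]
      apply Finset.sum_le_sum
      intro j _
      have := hkey j
      push_cast at this
      exact this
    have h2 : (((m:ℝ)-1)/B)^2 * ∑ j, (z j)^2 ≤ (((m:ℝ)-1)/B)^2 * B^2 := by
      apply mul_le_mul_of_nonneg_left hnorm (by positivity)
    have h3 : (((m:ℝ)-1)/B)^2 * B^2 = ((m:ℝ)-1)^2 := by
      field_simp
    rw [Finset.sum_add_distrib] at this
    linarith
  have hcast : (((m - 1 : ℕ)) : ℝ) = (m:ℝ) - 1 := by
    have : 1 ≤ m := Nat.one_le_of_lt hm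
    push_cast [this]
    ring
  have : (((∑ j, a j) + (∑ j, b j) : ℕ) : ℝ) ≤ (((m-1:ℕ))^2 : ℝ) := by
    rw [← hcast] at hsum
    push_cast at hsum ⊢
    exact hsum
  exact_mod_cast this
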